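/- arXiv:0807.0666 — 5 statements merged into one kernel-verified Lean document; each statement's English description precedes it below -/
import Mathlib

section
/- Let Δ be a self-adjoint operator on a Hilbert space H, let v be a unit vector with ‖(Δ-λ)v‖ ≤ K, and suppose the spectral subspace of Δ for the interval [λ-2K, λ+2K] has dimension at most M with M ≥ 1 and is spanned by orthonormal eigenvectors u₁,…,u_m (m ≤ M). Then there exists some i with |⟨u_i, v⟩|² ≥ 3/(4M). -/
open scoped ComplexInnerProductSpace

private lemma contraction_aux {H : Type*} [NormedAddCommGroup H] [InnerProductSpace ℂ H]
    [CompleteSpace H] (P : H →L[ℂ] H) (hPproj : IsIdempotentElem P) (hPsa : IsSelfAdjoint P)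
    (x : H) : ‖P x‖ ≤ ‖x‖ := by
  have hPP : P (P x) = P x := by
    calc P (P x) = (P * P) x := rfl
    _ = P x := by rw [hPproj]
  have h1 : (‖P x‖ : ℝ) ^ 2 = RCLike.re ⟪P x, P x⟫ := by
    rw [inner_self_eq_norm_sq]
  have h2 : ⟪P x, P x⟫ = ⟪x, P (P x)⟫ := hPsa.isSymmetric x (P x)
  rw [hPP] at h2
  have h3 : RCLike.re ⟪x, P x⟫ ≤ ‖x‖ * ‖P x‖ := by
    calc RCLike.re ⟪x, P x⟫ ≤ ‖(⟪x, P x⟫ : ℂ)‖ := RCLike.re_le_norm _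
    _ ≤ ‖x‖ * ‖P x‖ := norm_inner_le_norm _ _
  have h4 : (‖P x‖ : ℝ) ^ 2 ≤ ‖x‖ * ‖P x‖ := by rw [h1, h2]; exact h3
  nlinarith [norm_nonneg (P x), norm_nonneg x]

/-- If `v` is a unit vector in the domain of a self-adjoint operator `T` with
`‖(T - λ)v‖ ≤ K`, and the spectral subspace for `[λ - 2K, λ + 2K]` (the range of the
spectral projection `P`, characterized by the listed properties) has dimension `m ≤ M`
(`M ≥ 1`) and is spanned by orthonormal eigenvectors `u 0, …, u (m-1)`, then some `u i`
satisfies `|⟨u i, v⟩|² ≥ 3/(4M)`. -/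
theorem stmt1 {H : Type*} [NormedAddCommGroup H] [InnerProductSpace ℂ H] [CompleteSpace H]
    (dom : Submodule ℂ H) (T : dom →ₗ[ℂ] H) (P : H →L[ℂ] H)
    (hTsym : ∀ w z : dom, ⟪T w, (z : H)⟫ = ⟪(w : H), T z⟫)
    (hPproj : IsIdempotentElem P) (hPsa : IsSelfAdjoint P)
    (hPdom : ∀ w : dom, P (w : H) ∈ dom)
    (hPcomm : ∀ w : dom, T ⟨P (w : H), hPdom w⟩ = P (T w))
    (lam K : ℝ) (hK : 0 < K)
    (haway : ∀ w : dom, P (w : H) = 0 → 2 * K * ‖(w : H)‖ ≤ ‖T w - (lam : ℂ) • (w : H)‖)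
    (m M : ℕ) (hM : 1 ≤ M) (hmM : m ≤ M)
    (u : Fin m → H) (hortho : Orthonormal ℂ u)
    (hudom : ∀ i, u i ∈ dom) (μ : Fin m → ℝ)
    (heig : ∀ i, T ⟨u i, hudom i⟩ = (μ i : ℂ) • u i)
    (hspan : LinearMap.range (P : H →ₗ[ℂ] H) = Submodule.span ℂ (Set.range u))
    (v : dom) (hv : ‖(v : H)‖ = 1) (hKv : ‖T v - (lam : ℂ) • (v : H)‖ ≤ K) :
    ∃ i : Fin m, (3 : ℝ) / (4 * M) ≤ ‖⟪u i, (v : H)⟫‖ ^ 2 := by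
  classical
  have hPP : ∀ x : H, P (P x) = P x := fun x => by
    calc P (P x) = (P * P) x := rfl
    _ = P x := by rw [hPproj]
  -- the complementary projection
  have hQproj : IsIdempotentElem (1 - P) := hPproj.one_sub
  have hQsa : IsSelfAdjoint ((1 : H →L[ℂ] H) - P) := (IsSelfAdjoint.one (H →L[ℂ] H)).sub hPsa
  -- qv = v - P v as an element of dom
  set pv : dom := ⟨P (v : H), hPdom v⟩ with hpv
  set qv : dom := v - pv with hqv
  have hqvH : (qv : H) = (v : H) - P (v : H) := rfl
  have hPqv : P (qv : H) = 0 := by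
    rw [hqvH, map_sub, hPP]; abel
  -- (T - lam) qv = (1 - P) applied to (T - lam) v
  have hTqv : T qv - (lam : ℂ) • (qv : H)
      = (T v - (lam : ℂ) • (v : H)) - P (T v - (lam : ℂ) • (v : H)) := by
    have h1 : T qv = T v - P (T v) := by
      rw [hqv, map_sub, hPcomm v]
    rw [h1, hqvH, map_sub, map_smul, smul_sub]
    abel
  have hnorm1 : ‖T qv - (lam : ℂ) • (qv : H)‖ ≤ K := by
    rw [hTqv]
    have := contraction_aux (1 - P) hQproj hQsa (T v - (lam : ℂ) • (v : H))
    simp only [ContinuousLinearMap.sub_apply, ContinuousLinearMap.one_apply] at this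
    exact this.trans hKv
  have hqvnorm : ‖(qv : H)‖ ≤ 1 / 2 := by
    have := (haway qv hPqv).trans hnorm1
    nlinarith
  -- Pythagoras
  have hsym : ∀ x y : H, ⟪P x, y⟫ = ⟪x, P y⟫ := fun x y => hPsa.isSymmetric x y
  have horth : ⟪P (v : H), (qv : H)⟫ = 0 := by
    rw [hsym, hPqv, inner_zero_right]
  have hpyth : ‖P (v : H)‖ ^ 2 + ‖(qv : H)‖ ^ 2 = 1 := by
    have h := norm_add_sq_eq_norm_sq_add_norm_sq_of_inner_eq_zero _ _ horth
    have hsum : P (v : H) + (qv : H) = (v : H) := by rw [hqvH]; abel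
    rw [hsum, hv] at h
    linarith [h]
  have hPv34 : (3 : ℝ) / 4 ≤ ‖P (v : H)‖ ^ 2 := by nlinarith [norm_nonneg (qv : H)]
  -- P v lies in the span of the u i
  have hmem : P (v : H) ∈ Submodule.span ℂ (Set.range u) := by
    rw [← hspan]; exact ⟨(v : H), rfl⟩
  obtain ⟨c, hc⟩ := (Submodule.mem_span_range_iff_exists_fun ℂ).mp hmem
  -- P (u i) = u i
  have hPu : ∀ i, P (u i) = u i := by
    intro i
    have : u i ∈ LinearMap.range (P : H →ₗ[ℂ] H) := by
      rw [hspan]; exact Submodule.subset_span ⟨i, rfl⟩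
    obtain ⟨y, hy⟩ := this
    have hy' : P y = u i := hy
    rw [← hy', hPP]
  -- inner products
  have hinner : ∀ i, ⟪u i, (v : H)⟫ = c i := by
    intro i
    have h1 : ⟪u i, (qv : H)⟫ = 0 := by
      calc ⟪u i, (qv : H)⟫ = ⟪P (u i), (qv : H)⟫ := by rw [hPu]
      _ = ⟪u i, P (qv : H)⟫ := hsym _ _
      _ = 0 := by rw [hPqv, inner_zero_right]
    have h2 : ⟪u i, P (v : H)⟫ = c i := by
      rw [← hc]; exact hortho.inner_right_fintype c i
    have h3 : (v : H) = P (v : H) + (qv : H) := by rw [hqvH]; abel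
    rw [h3, inner_add_right, h1, h2, add_zero]
  -- Parseval for P v
  have hsumeq : ∑ i, ‖c i‖ ^ 2 = ‖P (v : H)‖ ^ 2 := by
    have h1 : ⟪P (v : H), P (v : H)⟫ = ∑ i, (starRingEnd ℂ) (c i) * c i := by
      rw [← hc]; exact hortho.inner_sum c c Finset.univ
    have h2 : (‖P (v : H)‖ : ℝ) ^ 2 = RCLike.re ⟪P (v : H), P (v : H)⟫ := by
      rw [inner_self_eq_norm_sq]
    rw [h2, h1, map_sum]
    refine Finset.sum_congr rfl fun i _ => ?_
    rw [RCLike.conj_mul]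
    simp [← Complex.ofReal_pow]
  -- conclude
  have hmpos : 0 < m := by
    rcases Nat.eq_zero_or_pos m with h0 | h
    · exfalso
      subst h0
      rw [Finset.univ_eq_empty, Finset.sum_empty] at hsumeq
      nlinarith
    · exact h
  have hMpos : (0 : ℝ) < M := by exact_mod_cast Nat.lt_of_lt_of_le Nat.zero_lt_one hM
  have hconst : ∑ _i : Fin m, (3 : ℝ) / (4 * M) ≤ ∑ i, ‖c i‖ ^ 2 := by
    rw [Finset.sum_const, Finset.card_univ, Fintype.card_fin, nsmul_eq_mul]
    rw [hsumeq]
    have hmle : (m : ℝ) ≤ M := by exact_mod_cast hmM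
    have : (m : ℝ) * (3 / (4 * M)) ≤ (M : ℝ) * (3 / (4 * M)) := by
      apply mul_le_mul_of_nonneg_right hmle
      positivity
    have heq : (M : ℝ) * (3 / (4 * M)) = 3 / 4 := by field_simp
    linarith
  obtain ⟨i, _, hi⟩ := Finset.exists_le_of_sum_le ⟨⟨0, hmpos⟩, Finset.mem_univ _⟩ hconst
  exact ⟨i, by rw [hinner i]; exact hi⟩
end

section
/- Let A be a self-adjoint bounded operator on a Hilbert space, u and v unit vectors with |⟨u, v⟩| ≥ δ and ‖(Id - A)v‖ ≤ ε with ε ≤ δ. Then ⟨A²u, u⟩ ≥ (δ - ε)². -/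
open scoped ComplexInnerProductSpace

/-- If `A` is a bounded self-adjoint operator, `u, v` unit vectors with `|⟨u,v⟩| ≥ δ`
and `‖(Id - A)v‖ ≤ ε ≤ δ`, then `⟨A²u, u⟩ ≥ (δ - ε)²`. -/
theorem stmt2 {H : Type*} [NormedAddCommGroup H] [InnerProductSpace ℂ H] [CompleteSpace H]
    (A : H →L[ℂ] H) (hA : IsSelfAdjoint A) (u v : H) (hu : ‖u‖ = 1) (hv : ‖v‖ = 1)
    (δ ε : ℝ) (hδ : 0 ≤ δ) (hε : 0 ≤ ε) (hεδ : ε ≤ δ)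
    (huv : δ ≤ ‖⟪u, v⟫‖) (hAv : ‖v - A v‖ ≤ ε) :
    (δ - ε) ^ 2 ≤ (⟪A (A u), u⟫).re := by
  have hsym : (A : H →ₗ[ℂ] H).IsSymmetric := hA.isSymmetric
  have h1 : (⟪A (A u), u⟫).re = ‖A u‖ ^ 2 := by
    have := hsym (A u) u
    simp only [ContinuousLinearMap.coe_coe] at this
    rw [this]
    rw [inner_self_eq_norm_sq_to_K]; norm_cast
  rw [h1]
  -- ⟪A u, v⟫ = ⟪u, v⟫ - ⟪u, v - A v⟫
  have h2 : ⟪A u, v⟫ = ⟪u, v⟫ - ⟪u, v - A v⟫ := by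
    have := hsym u v
    simp only [ContinuousLinearMap.coe_coe] at this
    rw [this, inner_sub_right]
    ring
  have h3 : δ - ε ≤ ‖⟪A u, v⟫‖ := by
    have hle : ‖⟪u, v - A v⟫‖ ≤ ε := by
      calc ‖⟪u, v - A v⟫‖ ≤ ‖u‖ * ‖v - A v‖ := norm_inner_le_norm u _
        _ ≤ 1 * ε := by rw [hu]; simpa using hAv
        _ = ε := one_mul ε
    calc δ - ε ≤ ‖⟪u, v⟫‖ - ‖⟪u, v - A v⟫‖ := by linarith
      _ ≤ ‖⟪u, v⟫ - ⟪u, v - A v⟫‖ := norm_sub_norm_le _ _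
      _ = ‖⟪A u, v⟫‖ := by rw [h2]
  have h4 : ‖⟪A u, v⟫‖ ≤ ‖A u‖ := by
    calc ‖⟪A u, v⟫‖ ≤ ‖A u‖ * ‖v‖ := norm_inner_le_norm _ _
      _ = ‖A u‖ := by rw [hv, mul_one]
  have h5 : δ - ε ≤ ‖A u‖ := le_trans h3 h4
  have := pow_le_pow_left₀ (by linarith) h5 2
  linarith
end

section
/- Let E : [1,2] → ℝ be a C¹ function with E nonincreasing, E(t) ≥ n²/2 on [1,2], and E'(t) ≤ -(c/4)E(t) wherever E(t) ∈ [n²-a, n²+a], where 0 < a ≤ n²/2 and c > 0. Then the Lebesgue measure of {t ∈ [1,2] : E(t) ∈ [n²-a, n²+a)} is at most (4/c)·(2a)/(n²/2) = 16a/(c n²). -/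
open MeasureTheory

/-- If `E` is a nonincreasing `C¹` function on `[1,2]` with `E ≥ n²/2` and
`E' ≤ -(c/4)E` wherever `E ∈ [n²-a, n²+a]` (with `0 < 2a ≤ n²`, `c > 0`), then the
Lebesgue measure of `{t ∈ [1,2] : E(t) ∈ [n²-a, n²+a)}` is at most `16a/(c n²)`. -/
theorem stmt6 (n : ℕ) (a c : ℝ) (ha : 0 < a) (hna : 2 * a ≤ (n : ℝ) ^ 2) (hc : 0 < c)
    (E E' : ℝ → ℝ)
    (hderiv : ∀ t ∈ Set.Icc (1 : ℝ) 2, HasDerivAt E (E' t) t)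
    (hE'cont : ContinuousOn E' (Set.Icc 1 2))
    (hmono : AntitoneOn E (Set.Icc 1 2))
    (hlower : ∀ t ∈ Set.Icc (1 : ℝ) 2, (n : ℝ) ^ 2 / 2 ≤ E t)
    (hineq : ∀ t ∈ Set.Icc (1 : ℝ) 2,
      E t ∈ Set.Icc ((n : ℝ) ^ 2 - a) ((n : ℝ) ^ 2 + a) → E' t ≤ -(c / 4) * E t) :
    volume {t ∈ Set.Icc (1 : ℝ) 2 | E t ∈ Set.Ico ((n : ℝ) ^ 2 - a) ((n : ℝ) ^ 2 + a)} ≤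
      ENNReal.ofReal (16 * a / (c * (n : ℝ) ^ 2)) := by
  set S := {t ∈ Set.Icc (1 : ℝ) 2 | E t ∈ Set.Ico ((n : ℝ) ^ 2 - a) ((n : ℝ) ^ 2 + a)} with hS
  have hn2 : (0 : ℝ) < (n : ℝ) ^ 2 := lt_of_lt_of_le (by linarith) hna
  set B := 16 * a / (c * (n : ℝ) ^ 2) with hB
  have hBpos : 0 < B := div_pos (by linarith) (mul_pos hc hn2)
  rcases Set.eq_empty_or_nonempty S with hSe | hSne
  · simp [hSe]
  -- key pairwise bound
  have key : ∀ t1 ∈ S, ∀ t2 ∈ S, t1 ≤ t2 → t2 - t1 ≤ B := by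
    intro t1 ht1 t2 ht2 h12
    obtain ⟨ht1I, hE1⟩ := ht1
    obtain ⟨ht2I, hE2⟩ := ht2
    have hsub : Set.Icc t1 t2 ⊆ Set.Icc (1 : ℝ) 2 :=
      Set.Icc_subset_Icc ht1I.1 ht2I.2
    have hmem : ∀ x ∈ Set.Icc t1 t2, E x ∈ Set.Icc ((n : ℝ) ^ 2 - a) ((n : ℝ) ^ 2 + a) := by
      intro x hx
      constructor
      · exact le_trans hE2.1 (hmono (hsub hx) ht2I hx.2)
      · exact le_trans (hmono ht1I (hsub hx) hx.1) hE1.2.le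
    have hdbound : ∀ x ∈ interior (Set.Icc t1 t2), deriv E x ≤ -(c * (n : ℝ) ^ 2 / 8) := by
      intro x hx
      have hx' : x ∈ Set.Icc t1 t2 := interior_subset hx
      have hxI : x ∈ Set.Icc (1 : ℝ) 2 := hsub hx'
      have hd := hderiv x hxI
      rw [hd.deriv]
      have h1 := hineq x hxI (hmem x hx')
      have h2 := hlower x hxI
      nlinarith
    have hcont : ContinuousOn E (Set.Icc t1 t2) := fun x hx =>
      ((hderiv x (hsub hx)).continuousAt).continuousWithinAt
    have hdiff : DifferentiableOn ℝ E (interior (Set.Icc t1 t2)) := fun x hx =>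
      ((hderiv x (hsub (interior_subset hx))).differentiableAt).differentiableWithinAt
    have hmvt := (convex_Icc t1 t2).image_sub_le_mul_sub_of_deriv_le hcont hdiff
      hdbound t1 (Set.left_mem_Icc.2 h12) t2 (Set.right_mem_Icc.2 h12) h12
    -- E t2 - E t1 ≤ -(c n²/8)(t2 - t1); also E t1 - E t2 ≤ 2a
    have hgap : E t1 - E t2 ≤ 2 * a := by
      have := hE1.2
      have := hE2.1
      linarith
    rw [hB, le_div_iff₀ (mul_pos hc hn2)]
    nlinarith
  have hbdd : BddAbove S ∧ BddBelow S := by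
    constructor
    · exact ⟨2, fun x hx => hx.1.2⟩
    · exact ⟨1, fun x hx => hx.1.1⟩
  have hsup : sSup S ≤ sInf S + B := by
    apply csSup_le hSne
    intro t2 ht2
    have : sInf S ≥ t2 - B := by
      apply le_csInf hSne
      intro t1 ht1
      rcases le_total t1 t2 with h | h
      · linarith [key t1 ht1 t2 ht2 h]
      · linarith
    linarith
  have hsubset : S ⊆ Set.Icc (sInf S) (sSup S) := fun x hx =>
    ⟨csInf_le hbdd.2 hx, le_csSup hbdd.1 hx⟩
  calc volume S ≤ volume (Set.Icc (sInf S) (sSup S)) := measure_mono hsubset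
    _ = ENNReal.ofReal (sSup S - sInf S) := by rw [Real.volume_Icc]
    _ ≤ ENNReal.ofReal B := ENNReal.ofReal_le_ofReal (by linarith)
end

section
/- Let Z ⊆ ℝ be measurable with finite measure, and let (A_n)_{n∈ℕ} be measurable subsets of Z with |A_n| ≥ |Z| - 3ε for all n ≥ n₀. Define D_k = {t ∈ Z : t ∈ A_n for at least k distinct values of n in the range k ≤ n < 5k}. Then for all k ≥ n₀, |D_k| ≥ |Z| - 4ε. -/
/-!
Double counting. For `t ∈ Z` outside `D_k`, `t` lies outside `A_n` for at least `3k + 1` of the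
`4k` indices `k ≤ n < 5k`, while each of these `A_n` misses at most `3ε` of `Z`. Integrating the
number of misses over `Z` gives `(3k + 1) |Z \ D_k| ≤ 4k · 3ε ≤ (3k + 1) · 4ε`.
-/

open MeasureTheory Finset
open scoped ENNReal

section Markov

variable {α ι : Type*} [MeasurableSpace α] (μ : Measure α) (s : Finset ι)

theorem mul_measure_le_card_filter_mem_le_sum {B : ι → Set α}
    [∀ i, DecidablePred (· ∈ B i)] (hB : ∀ i ∈ s, MeasurableSet (B i)) (m : ℕ) :
    m * μ {x | m ≤ #{i ∈ s | x ∈ B i}} ≤ ∑ i ∈ s, μ (B i) := by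
  have hcount (x : α) :
      (#{i ∈ s | x ∈ B i} : ℝ≥0∞) = ∑ i ∈ s, (B i).indicator 1 x := by
    rw [card_filter, Nat.cast_sum]
    refine sum_congr rfl fun i _ => ?_
    by_cases hx : x ∈ B i <;> simp [hx]
  have hmeas : Measurable fun x => ∑ i ∈ s, (B i).indicator (1 : α → ℝ≥0∞) x :=
    Finset.measurable_sum _ fun i hi => measurable_one.indicator (hB i hi)
  calc (m : ℝ≥0∞) * μ {x | m ≤ #{i ∈ s | x ∈ B i}}
      = m * μ {x | (m : ℝ≥0∞) ≤ ∑ i ∈ s, (B i).indicator 1 x} := by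
        simp_rw [← hcount, Nat.cast_le]
    _ ≤ ∫⁻ x, ∑ i ∈ s, (B i).indicator 1 x ∂μ :=
        mul_meas_ge_le_lintegral₀ hmeas.aemeasurable _
    _ = ∑ i ∈ s, μ (B i) := by
        rw [lintegral_finsetSum s fun i hi => measurable_one.indicator (hB i hi)]
        exact sum_congr rfl fun i hi => lintegral_indicator_one (hB i hi)

theorem mul_measure_le_card_filter_not_mem_le_card_mul {Z : Set α} {A : ι → Set α}
    [∀ i, DecidablePred (· ∈ A i)] (hA : ∀ i ∈ s, MeasurableSet (A i)) {c : ℝ≥0∞}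
    (hc : ∀ i ∈ s, μ (Z \ A i) ≤ c) (m : ℕ) :
    m * μ {x ∈ Z | m ≤ #{i ∈ s | x ∉ A i}} ≤ #s * c :=
  calc (m : ℝ≥0∞) * μ {x ∈ Z | m ≤ #{i ∈ s | x ∉ A i}}
      ≤ m * μ.restrict Z {x | m ≤ #{i ∈ s | x ∈ (A i)ᶜ}} := by
        refine mul_le_mul_right ((measure_mono ?_).trans (Measure.le_restrict_apply _ _)) _
        exact fun x hx => ⟨hx.2, hx.1⟩
    _ ≤ ∑ i ∈ s, μ.restrict Z (A i)ᶜ :=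
        mul_measure_le_card_filter_mem_le_sum _ _ (fun i hi => (hA i hi).compl) _
    _ ≤ ∑ _i ∈ s, c := by
        refine sum_le_sum fun i hi => ?_
        rw [Measure.restrict_apply (hA i hi).compl, ← Set.sdiff_eq_compl_inter]
        exact hc i hi
    _ = #s * c := by rw [sum_const, nsmul_eq_mul]

end Markov

theorem three_mul_lt_card_filter_not_of_ncard_lt {k : ℕ} {p : ℕ → Prop} [DecidablePred p]
    (h : {n : ℕ | k ≤ n ∧ n < 5 * k ∧ p n}.ncard < k) :
    3 * k < #{n ∈ Ico k (5 * k) | ¬ p n} := by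
  have hp : {n : ℕ | k ≤ n ∧ n < 5 * k ∧ p n} = ↑({n ∈ Ico k (5 * k) | p n}) := by
    ext n
    simp [and_assoc]
  have hsplit : #{n ∈ Ico k (5 * k) | p n} + #{n ∈ Ico k (5 * k) | ¬ p n} = 5 * k - k := by
    rw [card_filter_add_card_filter_not, Nat.card_Ico]
  rw [hp, Set.ncard_coe_finset] at h
  omega

theorem ENNReal.le_four_mul_of_mul_le {x c : ℝ≥0∞} (k : ℕ)
    (h : (3 * k + 1 : ℕ) * x ≤ (4 * k : ℕ) * (3 * c)) : x ≤ 4 * c := by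
  have hcoef : ((4 * k : ℕ) : ℝ≥0∞) * (3 * c) ≤ (3 * k + 1 : ℕ) * (4 * c) := by
    rw [← mul_assoc, ← mul_assoc]
    exact mul_le_mul_left (by exact_mod_cast (by omega : 4 * k * 3 ≤ (3 * k + 1) * 4)) c
  exact (ENNReal.mul_le_mul_iff_right (by positivity) (ENNReal.natCast_ne_top _)).1 (h.trans hcoef)

theorem stmt7_general (Z : Set ℝ) (hZfin : volume Z < ⊤)
    (ε : ℝ) (n₀ : ℕ) (A : ℕ → Set ℝ)
    (hAsub : ∀ n, A n ⊆ Z) (hAmeas : ∀ n, MeasurableSet (A n))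
    (hAbig : ∀ n ≥ n₀, volume Z ≤ volume (A n) + ENNReal.ofReal (3 * ε))
    (k : ℕ) (hk : n₀ ≤ k) :
    volume Z ≤
      volume {t ∈ Z | k ≤ {n : ℕ | k ≤ n ∧ n < 5 * k ∧ t ∈ A n}.ncard}
        + ENNReal.ofReal (4 * ε) := by
  classical
  set D := {t | k ≤ {n : ℕ | k ≤ n ∧ n < 5 * k ∧ t ∈ A n}.ncard}
  have hmiss : ∀ n ∈ Ico k (5 * k), volume (Z \ A n) ≤ ENNReal.ofReal (3 * ε) := fun n hn =>
    (measure_sdiff_le_iff_le_add (hAmeas n).nullMeasurableSet (hAsub n)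
      (measure_ne_top_of_subset (hAsub n) hZfin.ne)).2 (hAbig n (hk.trans (mem_Ico.1 hn).1))
  have hbad : Z \ D ⊆ {t ∈ Z | 3 * k + 1 ≤ #{n ∈ Ico k (5 * k) | t ∉ A n}} :=
    fun t ⟨htZ, htD⟩ => ⟨htZ, three_mul_lt_card_filter_not_of_ncard_lt (not_le.1 htD)⟩
  have hcount : ((3 * k + 1 : ℕ) : ℝ≥0∞) * volume (Z \ D)
      ≤ ((4 * k : ℕ) : ℝ≥0∞) * ENNReal.ofReal (3 * ε) := by
    calc _ ≤ ((3 * k + 1 : ℕ) : ℝ≥0∞) *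
            volume {t ∈ Z | 3 * k + 1 ≤ #{n ∈ Ico k (5 * k) | t ∉ A n}} := by gcongr
      _ ≤ _ := mul_measure_le_card_filter_not_mem_le_card_mul _ _ (fun n _ => hAmeas n) hmiss _
      _ = _ := by rw [Nat.card_Ico, show 5 * k - k = 4 * k by omega]
  calc volume Z ≤ volume (Z ∩ D) + volume (Z \ D) := measure_le_inter_add_sdiff _ _ _
    _ ≤ volume (Z ∩ D) + ENNReal.ofReal (4 * ε) := by
      gcongr
      simp only [ENNReal.ofReal_mul (by norm_num : (0 : ℝ) ≤ 4),
        ENNReal.ofReal_mul (by norm_num : (0 : ℝ) ≤ 3), ENNReal.ofReal_ofNat] at hcount ⊢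
      exact ENNReal.le_four_mul_of_mul_le k hcount

/-- If `A_n ⊆ Z` are measurable with `|A_n| ≥ |Z| - 3ε` for all `n ≥ n₀`, and
`D_k = {t ∈ Z : t ∈ A_n for at least k values of n with k ≤ n < 5k}`, then
`|D_k| ≥ |Z| - 4ε` for every `k ≥ n₀`. -/
theorem stmt7 (Z : Set ℝ) (hZ : MeasurableSet Z) (hZfin : volume Z < ⊤)
    (ε : ℝ) (hε : 0 < ε) (n₀ : ℕ) (A : ℕ → Set ℝ)
    (hAsub : ∀ n, A n ⊆ Z) (hAmeas : ∀ n, MeasurableSet (A n))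
    (hAbig : ∀ n ≥ n₀, volume Z ≤ volume (A n) + ENNReal.ofReal (3 * ε))
    (k : ℕ) (hk : n₀ ≤ k) :
    volume Z ≤
      volume {t ∈ Z | k ≤ {n : ℕ | k ≤ n ∧ n < 5 * k ∧ t ∈ A n}.ncard}
        + ENNReal.ofReal (4 * ε) :=
  stmt7_general Z hZfin ε n₀ A hAsub hAmeas hAbig k hk
end

section
/- For each j, let E_j : [1,2] → ℝ be nonincreasing and C¹, with γj ≤ E_j(t) ≤ Γj for all t and j (0 < γ ≤ Γ). Let G ⊆ [1,2] be measurable and suppose that for all t ∈ G and all j with n²/(2Γ) ≤ j ≤ 3n²/(2γ) one has E_j'(t) ≤ -(c/4)E_j(t). Then for n² ≥ 2a, ∑_{n²/(2Γ) ≤ j ≤ 3n²/(2γ)} |{t ∈ G : E_j(t) ∈ [n²-a, n²+a)}| ≤ 24a/(cγ). -/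
/-!
On the part `S_j` of `G` where `E_j` lies in the window `[n² - a, n² + a)` one has
`E_j ≥ n²/2`, hence `-E_j' ≥ c n²/8`. For an antitone function, `∫_{S_j} (-E_j')` is the
measure of the image `E_j(S_j)`, which lies in the window, so `|S_j| ≤ 2a / (c n²/8)`.
Summing over at most `3n²/(2γ)` indices gives `24a/(cγ)`.
-/

open MeasureTheory Set

theorem AntitoneOn.measurableSet_inter_preimage {α β : Type*} [LinearOrder α]
    [TopologicalSpace α] [MeasurableSpace α] [OpensMeasurableSpace α] [OrderClosedTopology α]
    [Preorder β]
    {f : α → β} {t : Set α} {s : Set β} (hf : AntitoneOn f t) (ht : MeasurableSet t)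
    (hs : s.OrdConnected) : MeasurableSet (t ∩ f ⁻¹' s) := by
  obtain ⟨u, hu, htu⟩ := hs.preimage_antitoneOn hf
  rw [htu]
  exact ht.inter hu.measurableSet

section Antitone

variable {f f' : ℝ → ℝ} {s : Set ℝ} {K : ℝ}

theorem ofReal_mul_volume_le_volume_image_of_antitoneOn (hs : MeasurableSet s)
    (hf' : ∀ x ∈ s, HasDerivWithinAt f (f' x) s x) (hf : AntitoneOn f s)
    (hK : ∀ x ∈ s, f' x ≤ -K) :
    ENNReal.ofReal K * volume s ≤ volume (f '' s) := by
  rw [← lintegral_deriv_eq_volume_image_of_antitoneOn hs hf' hf, ← setLIntegral_const]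
  exact setLIntegral_mono' hs fun x hx => ENNReal.ofReal_le_ofReal (by linarith [hK x hx])

theorem volume_le_of_antitoneOn_of_mapsTo_Ico {L U : ℝ} (hs : MeasurableSet s)
    (hf' : ∀ x ∈ s, HasDerivWithinAt f (f' x) s x) (hf : AntitoneOn f s)
    (hK₀ : 0 < K) (hK : ∀ x ∈ s, f' x ≤ -K) (hLU : MapsTo f s (Ico L U)) :
    volume s ≤ ENNReal.ofReal ((U - L) / K) := by
  have hK₀' : ENNReal.ofReal K ≠ 0 := by simpa using hK₀
  rw [ENNReal.ofReal_div_of_pos hK₀,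
    ENNReal.le_div_iff_mul_le (.inl hK₀') (.inl ENNReal.ofReal_ne_top), mul_comm,
    ← Real.volume_Ico]
  exact (ofReal_mul_volume_le_volume_image_of_antitoneOn hs hf' hf hK).trans
    (measure_mono hLU.image_subset)

end Antitone

theorem Nat.cast_card_Icc_ceil_floor_le {x y : ℝ} (hx : 0 < x) (hy : 0 ≤ y) :
    ((Finset.Icc ⌈x⌉₊ ⌊y⌋₊).card : ℝ) ≤ y := by
  have hceil : 1 ≤ ⌈x⌉₊ := Nat.one_le_iff_ne_zero.2 (by simpa using hx)
  have hcard : (Finset.Icc ⌈x⌉₊ ⌊y⌋₊).card ≤ ⌊y⌋₊ := by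
    rw [Nat.card_Icc]
    omega
  exact (Nat.cast_le.2 hcard).trans (Nat.floor_le hy)

theorem stmt11_general (γ Γ c a : ℝ) (hγ : 0 < γ) (hγΓ : γ ≤ Γ) (hc : 0 < c) (ha : 0 < a)
    (n : ℕ) (hna : 2 * a ≤ (n : ℝ) ^ 2)
    (E E' : ℕ → ℝ → ℝ)
    (hderiv : ∀ j : ℕ, ∀ t ∈ Set.Icc (1 : ℝ) 2, HasDerivAt (E j) (E' j t) t)
    (hmono : ∀ j : ℕ, AntitoneOn (E j) (Set.Icc 1 2))
    (G : Set ℝ) (hG : MeasurableSet G) (hGsub : G ⊆ Set.Icc 1 2)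
    (hineq : ∀ t ∈ G, ∀ j : ℕ, (n : ℝ) ^ 2 / (2 * Γ) ≤ (j : ℝ) →
      (j : ℝ) ≤ 3 * (n : ℝ) ^ 2 / (2 * γ) → E' j t ≤ -(c / 4) * E j t) :
    ∑ j ∈ Finset.Icc ⌈(n : ℝ) ^ 2 / (2 * Γ)⌉₊ ⌊3 * (n : ℝ) ^ 2 / (2 * γ)⌋₊,
      volume {t ∈ G | E j t ∈ Set.Ico ((n : ℝ) ^ 2 - a) ((n : ℝ) ^ 2 + a)}
      ≤ ENNReal.ofReal (24 * a / (c * γ)) := by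
  set N : ℝ := (n : ℝ) ^ 2
  have hN : 0 < N := by linarith
  have hper : ∀ j ∈ Finset.Icc ⌈N / (2 * Γ)⌉₊ ⌊3 * N / (2 * γ)⌋₊,
      volume {t ∈ G | E j t ∈ Ico (N - a) (N + a)} ≤
        ENNReal.ofReal (2 * a / (c * N / 8)) := by
    intro j hj
    obtain ⟨hj₁, hj₂⟩ := Finset.mem_Icc.1 hj
    have hjN : N / (2 * Γ) ≤ j := Nat.ceil_le.1 hj₁
    have hjN' : (j : ℝ) ≤ 3 * N / (2 * γ) := (Nat.le_floor_iff (by positivity)).1 hj₂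
    have hmonoG : AntitoneOn (E j) G := (hmono j).mono hGsub
    have hwidth : N + a - (N - a) = 2 * a := by ring
    rw [← hwidth]
    refine volume_le_of_antitoneOn_of_mapsTo_Ico
      (hmonoG.measurableSet_inter_preimage hG ordConnected_Ico)
      (fun t ht => (hderiv j t (hGsub ht.1)).hasDerivWithinAt) (hmonoG.mono inter_subset_left)
      (by positivity) (fun t ht => ?_) fun t ht => ht.2
    have hEt : N / 2 ≤ E j t := by linarith [ht.2.1]
    nlinarith [hineq t ht.1 j hjN hjN']
  have hcard := Nat.cast_card_Icc_ceil_floor_le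
    (x := N / (2 * Γ)) (y := 3 * N / (2 * γ)) (by have := hγ.trans_le hγΓ; positivity)
    (by positivity)
  calc _ ≤ _ • ENNReal.ofReal (2 * a / (c * N / 8)) := Finset.sum_le_card_nsmul _ _ _ hper
    _ = ENNReal.ofReal (_ * (2 * a / (c * N / 8))) := by
      rw [nsmul_eq_mul, ENNReal.ofReal_mul (by positivity), ENNReal.ofReal_natCast]
    _ ≤ ENNReal.ofReal (3 * N / (2 * γ) * (2 * a / (c * N / 8))) :=
      ENNReal.ofReal_le_ofReal (mul_le_mul_of_nonneg_right hcard (by positivity))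
    _ = ENNReal.ofReal (24 * a / (c * γ)) := by
      congr 1
      field_simp
      ring

/-- For nonincreasing `C¹` eigenvalue branches `E_j` on `[1,2]` with `γj ≤ E_j ≤ Γj`,
if `E_j' ≤ -(c/4)E_j` on a measurable `G ⊆ [1,2]` for all `j` with
`n²/(2Γ) ≤ j ≤ 3n²/(2γ)`, then
`∑_{n²/(2Γ) ≤ j ≤ 3n²/(2γ)} |{t ∈ G : E_j(t) ∈ [n²-a, n²+a)}| ≤ 24a/(cγ)`. -/
theorem stmt11 (γ Γ c a : ℝ) (hγ : 0 < γ) (hγΓ : γ ≤ Γ) (hc : 0 < c) (ha : 0 < a)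
    (n : ℕ) (hna : 2 * a ≤ (n : ℝ) ^ 2)
    (E E' : ℕ → ℝ → ℝ)
    (hderiv : ∀ j : ℕ, ∀ t ∈ Set.Icc (1 : ℝ) 2, HasDerivAt (E j) (E' j t) t)
    (hcont : ∀ j : ℕ, ContinuousOn (E' j) (Set.Icc 1 2))
    (hmono : ∀ j : ℕ, AntitoneOn (E j) (Set.Icc 1 2))
    (hbound : ∀ j : ℕ, 1 ≤ j → ∀ t ∈ Set.Icc (1 : ℝ) 2, γ * j ≤ E j t ∧ E j t ≤ Γ * j)
    (G : Set ℝ) (hG : MeasurableSet G) (hGsub : G ⊆ Set.Icc 1 2)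
    (hineq : ∀ t ∈ G, ∀ j : ℕ, (n : ℝ) ^ 2 / (2 * Γ) ≤ (j : ℝ) →
      (j : ℝ) ≤ 3 * (n : ℝ) ^ 2 / (2 * γ) → E' j t ≤ -(c / 4) * E j t) :
    ∑ j ∈ Finset.Icc ⌈(n : ℝ) ^ 2 / (2 * Γ)⌉₊ ⌊3 * (n : ℝ) ^ 2 / (2 * γ)⌋₊,
      volume {t ∈ G | E j t ∈ Set.Ico ((n : ℝ) ^ 2 - a) ((n : ℝ) ^ 2 + a)}
      ≤ ENNReal.ofReal (24 * a / (c * γ)) :=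
  stmt11_general γ Γ c a hγ hγΓ hc ha n hna E E' hderiv hmono G hG hGsub hineq
end
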